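/- arXiv:1001.0856 — 4 statements merged into one kernel-verified Lean document; each statement's English description precedes it below -/
import Mathlib

section
/- Let V, H be separable Hilbert spaces, T ∈ L(V,H), and set Q := T T* ∈ L(H). Then the image of Q^{1/2} equals the image of T, and for every x ∈ Im T, ‖Q^{-1/2} x‖_H = ‖T⁻¹ x‖_V, where Q^{-1/2} and T⁻¹ denote pseudo-inverses. -/
/-!
If `A† A = B† B`, then `‖A x‖ = ‖B x‖` for all `x`, so `A x ↦ B x` is a well-defined isometry
from `range A` onto `range B`; by completeness it extends to the closures, and the image `v` of
`u ∈ closure (range A) = (ker A†)ᗮ` satisfies `⟪v, B x⟫ = ⟪u, A x⟫`, i.e. `B† v = A† u`, with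
`‖v‖ = ‖u‖`. Hence `range A† ⊆ range B†`, the reverse inclusion holds by symmetry, and the
preimages in the orthogonal complements of the kernels have equal norms. The theorem is the case
`A = Q^{1/2}`, `B = T†`, for which `A† A = Q = B† B`.
-/

open scoped RealInnerProductSpace InnerProduct
open ContinuousLinearMap Filter Topology

namespace ContinuousLinearMap

open scoped InnerProductSpace

variable {𝕜 H E F : Type*} [RCLike 𝕜]
  [NormedAddCommGroup H] [InnerProductSpace 𝕜 H]
  [NormedAddCommGroup E] [InnerProductSpace 𝕜 E]
  [NormedAddCommGroup F] [InnerProductSpace 𝕜 F]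

theorem eq_of_mem_orthogonal_ker_of_apply_eq (T : E →L[𝕜] F) {v w : E}
    (hv : v ∈ (T : E →ₗ[𝕜] F).kerᗮ) (hw : w ∈ (T : E →ₗ[𝕜] F).kerᗮ) (h : T v = T w) :
    v = w := by
  have hker : v - w ∈ (T : E →ₗ[𝕜] F).ker := by simp [h]
  have hbot := (T : E →ₗ[𝕜] F).ker.inf_orthogonal_eq_bot
  exact sub_eq_zero.mp ((Submodule.mem_bot 𝕜).mp (hbot ▸ ⟨hker, sub_mem hv hw⟩))

theorem range_eq_image_orthogonal_ker [CompleteSpace E] (T : E →L[𝕜] F) :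
    Set.range T = T '' (T : E →ₗ[𝕜] F).kerᗮ := by
  refine subset_antisymm ?_ (Set.image_subset_range _ _)
  rintro _ ⟨x, rfl⟩
  refine ⟨_, Submodule.sub_starProjection_mem_orthogonal x, ?_⟩
  rw [map_sub, sub_eq_self]
  exact (T : E →ₗ[𝕜] F).ker.starProjection_apply_mem x

theorem exists_norm_eq_inner_eq_of_mem_closure_range [CompleteSpace F]
    {A : H →L[𝕜] E} {B : H →L[𝕜] F} (h : ∀ x y, ⟪A x, A y⟫_𝕜 = ⟪B x, B y⟫_𝕜)
    {u : E} (hu : u ∈ closure (Set.range A)) :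
    ∃ v ∈ closure (Set.range B), ‖v‖ = ‖u‖ ∧ ∀ x, ⟪v, B x⟫_𝕜 = ⟪u, A x⟫_𝕜 := by
  have hnorm (x : H) : ‖A x‖ = ‖B x‖ := by
    rw [norm_eq_sqrt_re_inner (𝕜 := 𝕜), norm_eq_sqrt_re_inner (𝕜 := 𝕜), h]
  obtain ⟨a, ha⟩ : ∃ a : ℕ → H, Tendsto (A ∘ a) atTop (𝓝 u) := by
    obtain ⟨y, hy, hlim⟩ := mem_closure_iff_seq_limit.mp hu
    choose a ha using hy
    exact ⟨a, by simpa only [Function.comp_def, ha] using hlim⟩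
  have hdist (m n : ℕ) : dist (B (a m)) (B (a n)) = dist (A (a m)) (A (a n)) := by
    simp only [dist_eq_norm, ← map_sub, hnorm]
  have hB : CauchySeq (B ∘ a) := by
    simpa only [Metric.cauchySeq_iff, Function.comp_apply, hdist] using ha.cauchySeq
  obtain ⟨v, hv⟩ := cauchySeq_tendsto_of_complete hB
  refine ⟨v, mem_closure_of_tendsto hv (Eventually.of_forall fun n => ⟨a n, rfl⟩), ?_, fun x => ?_⟩
  · exact tendsto_nhds_unique hv.norm (by simpa only [Function.comp_def, hnorm] using ha.norm)
  · exact tendsto_nhds_unique (hv.inner tendsto_const_nhds)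
      (by simpa only [Function.comp_def, h] using ha.inner (𝕜 := 𝕜) (tendsto_const_nhds (x := A x)))

variable [CompleteSpace H] [CompleteSpace E] [CompleteSpace F]

theorem coe_orthogonal_ker_adjoint (A : H →L[𝕜] E) :
    ((A† : E →ₗ[𝕜] H).kerᗮ : Set E) = closure (Set.range A) := by
  rw [orthogonal_ker, adjoint_adjoint, Submodule.topologicalClosure_coe, LinearMap.coe_range,
    coe_coe]

variable {A : H →L[𝕜] E} {B : H →L[𝕜] F}

theorem inner_apply_apply_eq_of_adjoint_comp_self_eq (h : A† ∘L A = B† ∘L B) (x y : H) :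
    ⟪A x, A y⟫_𝕜 = ⟪B x, B y⟫_𝕜 := by
  rw [← adjoint_inner_left, ← adjoint_inner_left, ← comp_apply, ← comp_apply, h]

theorem exists_adjoint_apply_eq_of_mem_orthogonal_ker (h : A† ∘L A = B† ∘L B) {u : E}
    (hu : u ∈ (A† : E →ₗ[𝕜] H).kerᗮ) :
    ∃ v ∈ (B† : F →ₗ[𝕜] H).kerᗮ, (B†) v = (A†) u ∧ ‖v‖ = ‖u‖ := by
  rw [← SetLike.mem_coe, coe_orthogonal_ker_adjoint] at hu
  obtain ⟨v, hv, hnorm, hinner⟩ := exists_norm_eq_inner_eq_of_mem_closure_range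
    (inner_apply_apply_eq_of_adjoint_comp_self_eq h) hu
  refine ⟨v, ?_, ext_inner_right 𝕜 fun x => ?_, hnorm⟩
  · rwa [← SetLike.mem_coe, coe_orthogonal_ker_adjoint]
  · rw [adjoint_inner_left, adjoint_inner_left, hinner]

theorem range_adjoint_subset_of_adjoint_comp_self_eq (h : A† ∘L A = B† ∘L B) :
    Set.range (A†) ⊆ Set.range (B†) := by
  rw [range_eq_image_orthogonal_ker (A†)]
  rintro _ ⟨u, hu, rfl⟩
  obtain ⟨v, -, hv, -⟩ := exists_adjoint_apply_eq_of_mem_orthogonal_ker h hu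
  exact ⟨v, hv⟩

theorem range_adjoint_eq_of_adjoint_comp_self_eq (h : A† ∘L A = B† ∘L B) :
    Set.range (A†) = Set.range (B†) :=
  (range_adjoint_subset_of_adjoint_comp_self_eq h).antisymm
    (range_adjoint_subset_of_adjoint_comp_self_eq h.symm)

theorem norm_eq_of_adjoint_apply_eq (h : A† ∘L A = B† ∘L B) {u : E} {v : F}
    (hu : u ∈ (A† : E →ₗ[𝕜] H).kerᗮ) (hv : v ∈ (B† : F →ₗ[𝕜] H).kerᗮ) (huv : (A†) u = (B†) v) :
    ‖u‖ = ‖v‖ := by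
  obtain ⟨w, hw, hBw, hnorm⟩ := exists_adjoint_apply_eq_of_mem_orthogonal_ker h hu
  rw [← hnorm, (B†).eq_of_mem_orthogonal_ker_of_apply_eq hw hv (hBw.trans huv)]

end ContinuousLinearMap

/-- `S` plays `Q^{1/2}`, and `Q^{-1/2} x`, `T⁻¹ x` are the preimages `u ∈ (ker S)ᗮ`, `v ∈ (ker T)ᗮ`
of `x`. -/
theorem range_sqrt_eq_range_and_pseudoInverse_norm_general
    {V H : Type*} [NormedAddCommGroup V] [InnerProductSpace ℝ V] [CompleteSpace V]
    [NormedAddCommGroup H] [InnerProductSpace ℝ H] [CompleteSpace H]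
    (T : V →L[ℝ] H) (S : H →L[ℝ] H)
    (hsa : IsSelfAdjoint S)
    (hsq : S ∘L S = T ∘L ContinuousLinearMap.adjoint T) :
    Set.range S = Set.range T ∧
      ∀ (x : H) (u : H) (v : V), u ∈ (LinearMap.ker (S : H →ₗ[ℝ] H))ᗮ → S u = x →
        v ∈ (LinearMap.ker (T : V →ₗ[ℝ] H))ᗮ → T v = x → ‖u‖ = ‖v‖ := by
  have h : S† ∘L S = T†† ∘L T† := by rw [hsa.adjoint_eq, adjoint_adjoint, hsq]
  refine ⟨?_, fun x u v hu hSu hv hTv => ?_⟩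
  · simpa only [hsa.adjoint_eq, adjoint_adjoint] using range_adjoint_eq_of_adjoint_comp_self_eq h
  · rw [← hsa.adjoint_eq] at hu hSu
    rw [← adjoint_adjoint T] at hv hTv
    exact norm_eq_of_adjoint_apply_eq h hu hv (hSu.trans hTv.symm)

/-- Let `T ∈ L(V,H)` and `Q := T T* ∈ L(H)`.  If `S` is the (unique, via the functional
calculus) non-negative self-adjoint square root `Q^{1/2}` of `Q`, i.e. `S ∘ S = T T*`,
then `Im Q^{1/2} = Im T`, and for every `x ∈ Im T`, `‖Q^{-1/2} x‖_H = ‖T⁻¹ x‖_V`, where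
the pseudo-inverses are expressed through the unique preimages in `(Ker Q^{1/2})ᗮ`
and `(Ker T)ᗮ` respectively. -/
theorem range_sqrt_eq_range_and_pseudoInverse_norm
    {V H : Type*} [NormedAddCommGroup V] [InnerProductSpace ℝ V] [CompleteSpace V]
    [NormedAddCommGroup H] [InnerProductSpace ℝ H] [CompleteSpace H]
    (T : V →L[ℝ] H) (S : H →L[ℝ] H)
    (hsa : IsSelfAdjoint S) (hpos : ∀ x : H, 0 ≤ ⟪S x, x⟫)
    (hsq : S ∘L S = T ∘L ContinuousLinearMap.adjoint T) :
    Set.range S = Set.range T ∧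
      ∀ (x : H) (u : H) (v : V), u ∈ (LinearMap.ker (S : H →ₗ[ℝ] H))ᗮ → S u = x →
        v ∈ (LinearMap.ker (T : V →ₗ[ℝ] H))ᗮ → T v = x → ‖u‖ = ‖v‖ :=
  range_sqrt_eq_range_and_pseudoInverse_norm_general T S hsa hsq
end

section
/- For every T > 0 there exist positive constants c₁, c₂ (depending only on T) such that for all ξ ∈ ℝ^d with ξ ≠ 0, c₁/(1+|ξ|²) ≤ ∫₀^T sin²(2π t |ξ|)/(4π² |ξ|²) dt ≤ c₂/(1+|ξ|²). Consequently, ∫₀^T dt ∫_{ℝ^d} |sin(2πt|ξ|)/(2π|ξ|)|² μ(dξ) < ∞ if and only if ∫_{ℝ^d} μ(dξ)/(1+|ξ|²) < ∞. -/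
/-!
The time integral `K_T(r) = ∫₀^T sin²(2πtr)/(4π²r²) dt` is of order `T³` for small `r`, where
`sin x ≥ 2x/π` (Jordan), and of order `T/r²` for large `r`, where `sin²` has mean `1/2`; hence it is
comparable to `1/(1+r²)`. By Tonelli the double integral is `∫ K_T(|ξ|) μ(dξ)`, so the comparison
transfers to the integrals against `μ`, except at `ξ = 0`, where the kernel vanishes; there `μ` has
finite mass because it is tempered, which also makes `μ` s-finite, as Tonelli requires.
-/

open MeasureTheory Real
open scoped ENNReal

theorem integral_sin_mul_sq {ω : ℝ} (hω : ω ≠ 0) (T : ℝ) :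
    ∫ t in (0 : ℝ)..T, sin (ω * t) ^ 2 = T / 2 - sin (2 * ω * T) / (4 * ω) := by
  rw [intervalIntegral.integral_comp_mul_left (fun x => sin x ^ 2) hω, integral_sin_sq,
    mul_assoc, sin_two_mul]
  simp only [mul_zero, sin_zero, zero_mul, smul_eq_mul]
  field_simp
  ring

lemma continuous_sin_sq_div_sq (r : ℝ) :
    Continuous fun t : ℝ => sin (2 * π * t * r) ^ 2 / (4 * π ^ 2 * r ^ 2) := by
  fun_prop

-- `sin² x ≤ min (x², 1)`, and `(1 + r²) · min (t², 1 / (4π²r²)) ≤ t² + 1 / (4π²)`.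
lemma sin_sq_div_sq_le (t r : ℝ) :
    sin (2 * π * t * r) ^ 2 / (4 * π ^ 2 * r ^ 2) ≤ (t ^ 2 + 1 / (4 * π ^ 2)) / (1 + r ^ 2) := by
  rcases eq_or_ne r 0 with rfl | hr
  · simp only [ne_eq, OfNat.ofNat_ne_zero, not_false_eq_true, zero_pow, mul_zero, div_zero]
    positivity
  rw [div_le_div_iff₀ (by positivity) (by positivity)]
  have h_sq : sin (2 * π * t * r) ^ 2 ≤ (2 * π * t * r) ^ 2 := sin_sq_le_sq
  have h_one : sin (2 * π * t * r) ^ 2 * r ^ 2 ≤ r ^ 2 :=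
    mul_le_of_le_one_left (sq_nonneg r) (sin_sq_le_one _)
  have hπ : 1 / (4 * π ^ 2) * (4 * π ^ 2) = 1 := by field_simp
  nlinarith [sq_nonneg (π * t * r)]

lemma integral_sin_sq_div_sq_le {T : ℝ} (hT : 0 ≤ T) (r : ℝ) :
    ∫ t in (0 : ℝ)..T, sin (2 * π * t * r) ^ 2 / (4 * π ^ 2 * r ^ 2)
      ≤ (T ^ 3 / 3 + T / (4 * π ^ 2)) / (1 + r ^ 2) := by
  calc ∫ t in (0 : ℝ)..T, sin (2 * π * t * r) ^ 2 / (4 * π ^ 2 * r ^ 2)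
      ≤ ∫ t in (0 : ℝ)..T, (t ^ 2 + 1 / (4 * π ^ 2)) / (1 + r ^ 2) :=
        intervalIntegral.integral_mono_on hT ((continuous_sin_sq_div_sq r).intervalIntegrable _ _)
          (by apply Continuous.intervalIntegrable; fun_prop) fun t _ => sin_sq_div_sq_le t r
    _ = (T ^ 3 / 3 + T / (4 * π ^ 2)) / (1 + r ^ 2) := by
        rw [intervalIntegral.integral_div, intervalIntegral.integral_add
          (intervalIntegral.intervalIntegrable_pow 2) intervalIntegrable_const, integral_pow,
          intervalIntegral.integral_const, smul_eq_mul]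
        ring

-- When `4 T r ≤ 1` the argument `2πtr` stays in `[0, π/2]`, where Jordan's inequality holds.
lemma le_integral_sin_sq_div_sq_of_le {T r : ℝ} (hT : 0 ≤ T) (hr : 0 < r) (hTr : 4 * T * r ≤ 1) :
    4 * T ^ 3 / (3 * π ^ 2)
      ≤ ∫ t in (0 : ℝ)..T, sin (2 * π * t * r) ^ 2 / (4 * π ^ 2 * r ^ 2) := by
  have h_jordan : ∀ t ∈ Set.Icc 0 T,
      4 * t ^ 2 / π ^ 2 ≤ sin (2 * π * t * r) ^ 2 / (4 * π ^ 2 * r ^ 2) := by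
    rintro t ⟨ht0, htT⟩
    have h_arg : 2 * π * t * r ≤ π / 2 := by
      nlinarith [pi_pos, mul_le_mul_of_nonneg_right htT hr.le]
    have h_sin : 4 * t * r ≤ sin (2 * π * t * r) := by
      have := mul_le_sin (by positivity) h_arg
      rwa [show 2 / π * (2 * π * t * r) = 4 * t * r by field_simp; ring] at this
    rw [le_div_iff₀ (by positivity),
      show 4 * t ^ 2 / π ^ 2 * (4 * π ^ 2 * r ^ 2) = (4 * t * r) ^ 2 by field_simp]
    exact pow_le_pow_left₀ (by positivity) h_sin 2
  calc 4 * T ^ 3 / (3 * π ^ 2) = ∫ t in (0 : ℝ)..T, 4 * t ^ 2 / π ^ 2 := by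
        rw [intervalIntegral.integral_div, intervalIntegral.integral_const_mul, integral_pow]
        ring
    _ ≤ _ := intervalIntegral.integral_mono_on hT
        (by apply Continuous.intervalIntegrable; fun_prop)
        ((continuous_sin_sq_div_sq r).intervalIntegrable _ _) h_jordan

lemma le_integral_sin_sq_div_sq_of_ge {T r : ℝ} (hr : 0 < r) (hTr : 1 ≤ 4 * T * r) :
    T / (16 * π ^ 2 * r ^ 2)
      ≤ ∫ t in (0 : ℝ)..T, sin (2 * π * t * r) ^ 2 / (4 * π ^ 2 * r ^ 2) := by
  have h_sin_sq : T / 4 ≤ ∫ t in (0 : ℝ)..T, sin (2 * π * t * r) ^ 2 := by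
    have h := integral_sin_mul_sq (mul_ne_zero two_pi_pos.ne' hr.ne') T
    simp_rw [mul_right_comm (2 * π) _ r, h]
    rw [sub_div' (by positivity), le_div_iff₀ (by positivity)]
    nlinarith [sin_le_one (2 * (2 * π * r) * T), pi_gt_three]
  rw [intervalIntegral.integral_div, show 16 * π ^ 2 * r ^ 2 = 4 * (4 * π ^ 2 * r ^ 2) by ring,
    ← div_div]
  gcongr

lemma le_integral_sin_sq_div_sq {T r : ℝ} (hT : 0 ≤ T) (hr : 0 < r) :
    min (4 * T ^ 3 / (3 * π ^ 2)) (T / (16 * π ^ 2)) / (1 + r ^ 2)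
      ≤ ∫ t in (0 : ℝ)..T, sin (2 * π * t * r) ^ 2 / (4 * π ^ 2 * r ^ 2) := by
  rcases le_total (4 * T * r) 1 with hTr | hTr
  · refine le_trans ?_ (le_integral_sin_sq_div_sq_of_le hT hr hTr)
    exact (div_le_self (le_min (by positivity) (by positivity)) (by nlinarith)).trans
      (min_le_left _ _)
  · refine le_trans ?_ (le_integral_sin_sq_div_sq_of_ge hr hTr)
    calc _ ≤ T / (16 * π ^ 2) / (1 + r ^ 2) := by gcongr; exact min_le_right _ _
      _ ≤ T / (16 * π ^ 2) / r ^ 2 := by gcongr; linarith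
      _ = T / (16 * π ^ 2 * r ^ 2) := div_div _ _ _

section Measure

variable {α : Type*} [MeasurableSpace α] {μ : Measure α}

lemma sFinite_of_lintegral_ne_top {f : α → ℝ≥0∞} (hf : AEMeasurable f μ)
    (hf_ne_zero : ∀ᵐ x ∂μ, f x ≠ 0) (hf_int : ∫⁻ x, f x ∂μ ≠ ∞) : SFinite μ :=
  have := isFiniteMeasure_withDensity hf_int
  sFinite_of_absolutelyContinuous (withDensity_absolutelyContinuous' hf hf_ne_zero)

lemma lintegral_lt_top_of_le_add_mul {f g h : α → ℝ≥0∞} {C : ℝ≥0∞}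
    (hle : ∀ x, f x ≤ h x + C * g x) (hh : AEMeasurable h μ) (hC : C ≠ ∞)
    (hh_int : ∫⁻ x, h x ∂μ < ∞) (hg_int : ∫⁻ x, g x ∂μ < ∞) :
    ∫⁻ x, f x ∂μ < ∞ := by
  refine (lintegral_mono hle).trans_lt ?_
  rw [lintegral_add_left' hh, lintegral_const_mul' _ _ hC]
  exact ENNReal.add_lt_top.mpr ⟨hh_int, ENNReal.mul_lt_top hC.lt_top hg_int⟩

lemma lintegral_Ioc_lintegral_sin_div_sq [SFinite μ] {ρ : α → ℝ} (hρ : Measurable ρ) {T : ℝ}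
    (hT : 0 ≤ T) :
    ∫⁻ t in Set.Ioc 0 T, ∫⁻ x, ENNReal.ofReal ((sin (2 * π * t * ρ x) / (2 * π * ρ x)) ^ 2) ∂μ
      = ∫⁻ x, ENNReal.ofReal
          (∫ t in (0 : ℝ)..T, sin (2 * π * t * ρ x) ^ 2 / (4 * π ^ 2 * ρ x ^ 2)) ∂μ := by
  have h_meas : Measurable fun p : ℝ × α =>
      ENNReal.ofReal ((sin (2 * π * p.1 * ρ p.2) / (2 * π * ρ p.2)) ^ 2) := by
    fun_prop
  rw [lintegral_lintegral_swap h_meas.aemeasurable]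
  refine lintegral_congr fun x => ?_
  rw [intervalIntegral.integral_of_le hT, ofReal_integral_eq_lintegral_ofReal
    (continuous_sin_sq_div_sq (ρ x)).integrableOn_Ioc (.of_forall fun t => by positivity)]
  congr! 3 with t
  ring

end Measure

theorem wave_kernel_fourier_integrability_general
    (d : ℕ) (T : ℝ) (hT : 0 < T)
    (μ : Measure (EuclideanSpace ℝ (Fin d)))
    (m : ℕ)
    (htemp : (∫⁻ ξ, ENNReal.ofReal ((1 + ‖ξ‖ ^ 2) ^ (-(m : ℝ))) ∂μ) < ⊤) :
    (∃ c₁ c₂ : ℝ, 0 < c₁ ∧ 0 < c₂ ∧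
      ∀ ξ : EuclideanSpace ℝ (Fin d), ξ ≠ 0 →
        c₁ / (1 + ‖ξ‖ ^ 2)
            ≤ (∫ t in (0 : ℝ)..T, (Real.sin (2 * π * t * ‖ξ‖)) ^ 2 / (4 * π ^ 2 * ‖ξ‖ ^ 2)) ∧
          (∫ t in (0 : ℝ)..T, (Real.sin (2 * π * t * ‖ξ‖)) ^ 2 / (4 * π ^ 2 * ‖ξ‖ ^ 2))
            ≤ c₂ / (1 + ‖ξ‖ ^ 2)) ∧
    ((∫⁻ t in Set.Ioc (0 : ℝ) T,
        ∫⁻ ξ, ENNReal.ofReal ((Real.sin (2 * π * t * ‖ξ‖) / (2 * π * ‖ξ‖)) ^ 2) ∂μ) < ⊤ ↔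
      (∫⁻ ξ, ENNReal.ofReal (1 / (1 + ‖ξ‖ ^ 2)) ∂μ) < ⊤) := by
  set c₁ := min (4 * T ^ 3 / (3 * π ^ 2)) (T / (16 * π ^ 2))
  set c₂ := T ^ 3 / 3 + T / (4 * π ^ 2)
  have hc₁ : 0 < c₁ := lt_min (by positivity) (by positivity)
  have h_weight : Measurable fun ξ : EuclideanSpace ℝ (Fin d) =>
      ENNReal.ofReal ((1 + ‖ξ‖ ^ 2) ^ (-(m : ℝ))) := by fun_prop
  have : SFinite μ := sFinite_of_lintegral_ne_top h_weight.aemeasurable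
    (.of_forall fun ξ => by positivity) htemp.ne
  refine ⟨⟨c₁, c₂, hc₁, by positivity, fun ξ hξ =>
    ⟨le_integral_sin_sq_div_sq hT.le (norm_pos_iff.mpr hξ), integral_sin_sq_div_sq_le hT.le _⟩⟩, ?_⟩
  rw [lintegral_Ioc_lintegral_sin_div_sq measurable_norm hT.le]
  constructor
  · refine lintegral_lt_top_of_le_add_mul (C := ENNReal.ofReal c₁⁻¹) (fun ξ => ?_)
      h_weight.aemeasurable ENNReal.ofReal_ne_top htemp
    rcases eq_or_ne ξ 0 with rfl | hξ
    · simp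
    · rw [← ENNReal.ofReal_mul (by positivity)]
      refine le_add_left (ENNReal.ofReal_le_ofReal ?_)
      rw [le_inv_mul_iff₀ hc₁, mul_one_div]
      exact le_integral_sin_sq_div_sq hT.le (norm_pos_iff.mpr hξ)
  · refine fun h_fin => lintegral_lt_top_of_le_add_mul (C := ENNReal.ofReal c₂) (h := 0)
      (fun ξ => ?_) aemeasurable_const ENNReal.ofReal_ne_top (by simp) h_fin
    rw [Pi.zero_apply, zero_add, ← ENNReal.ofReal_mul (by positivity), mul_one_div]
    exact ENNReal.ofReal_le_ofReal (integral_sin_sq_div_sq_le hT.le _)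

/-- For the wave kernel on `ℝ^d`, whose spatial Fourier transform is
`F Γ(t)(ξ) = sin(2πt|ξ|)/(2π|ξ|)`: for every `T > 0` there are constants
`c₁, c₂ > 0` with `c₁/(1+|ξ|²) ≤ ∫₀^T sin²(2πt|ξ|)/(4π²|ξ|²) dt ≤ c₂/(1+|ξ|²)` for
all `ξ ≠ 0`, and consequently, for a non-negative tempered measure `μ`,
`∫₀^T ∫ |sin(2πt|ξ|)/(2π|ξ|)|² μ(dξ) dt < ∞  ↔  ∫ μ(dξ)/(1+|ξ|²) < ∞`. -/
theorem wave_kernel_fourier_integrability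
    (d : ℕ) (T : ℝ) (hT : 0 < T)
    (μ : Measure (EuclideanSpace ℝ (Fin d)))
    (m : ℕ) (hm : 1 ≤ m)
    (htemp : (∫⁻ ξ, ENNReal.ofReal ((1 + ‖ξ‖ ^ 2) ^ (-(m : ℝ))) ∂μ) < ⊤) :
    (∃ c₁ c₂ : ℝ, 0 < c₁ ∧ 0 < c₂ ∧
      ∀ ξ : EuclideanSpace ℝ (Fin d), ξ ≠ 0 →
        c₁ / (1 + ‖ξ‖ ^ 2)
            ≤ (∫ t in (0 : ℝ)..T, (Real.sin (2 * π * t * ‖ξ‖)) ^ 2 / (4 * π ^ 2 * ‖ξ‖ ^ 2)) ∧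
          (∫ t in (0 : ℝ)..T, (Real.sin (2 * π * t * ‖ξ‖)) ^ 2 / (4 * π ^ 2 * ‖ξ‖ ^ 2))
            ≤ c₂ / (1 + ‖ξ‖ ^ 2)) ∧
    ((∫⁻ t in Set.Ioc (0 : ℝ) T,
        ∫⁻ ξ, ENNReal.ofReal ((Real.sin (2 * π * t * ‖ξ‖) / (2 * π * ‖ξ‖)) ^ 2) ∂μ) < ⊤ ↔
      (∫⁻ ξ, ENNReal.ofReal (1 / (1 + ‖ξ‖ ^ 2)) ∂μ) < ⊤) :=
  wave_kernel_fourier_integrability_general d T hT μ m htemp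
end

section
/- Let f : ℝ^d → [0,∞) be continuous on ℝ^d \ {0}, integrable near 0, and equal to the Fourier transform of a non-negative tempered measure μ on ℝ^d. Then for all φ, ψ in the Schwartz space S(ℝ^d), ∫_{ℝ^d} ∫_{ℝ^d} φ(x) f(x−y) ψ(y) dx dy = ∫_{ℝ^d} F φ(ξ) · conj(F ψ(ξ)) μ(dξ), where F φ(ξ) = ∫ φ(x) e^{−2πi ξ·x} dx. In particular, the bilinear form (φ,ψ) ↦ ∫∫ φ(x) f(x−y) ψ(y) dx dy is a positive semi-definite symmetric form on S(ℝ^d). -/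
/-!
Write the inner integral as `∫ f(z) ψ(x - z) dz` and apply the representation of `f` to the
Schwartz function `z ↦ ψ(x - z)`: since `ψ` is real, its Fourier transform is
`e^{-2πi⟨x,ξ⟩} conj(𝓕ψ(ξ))`. The form becomes `∫ φ(x) ∫ e^{-2πi⟨x,ξ⟩} conj(𝓕ψ(ξ)) dμ(ξ) dx`, and
Fubini (legitimate because `𝓕ψ` is Schwartz, hence integrable for the tempered measure `μ`) turns
it into `∫ 𝓕φ conj(𝓕ψ) dμ`. Symmetry and positivity are read off this right-hand side.
-/

open MeasureTheory
open scoped SchwartzMap FourierTransform RealInnerProductSpace ComplexConjugate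

theorem one_add_norm_rpow_neg_two_mul_le {E : Type*} [NormedAddCommGroup E] (m : ℕ) (x : E) :
    (1 + ‖x‖) ^ (-((2 * m : ℕ) : ℝ)) ≤ (1 + ‖x‖ ^ 2) ^ (-(m : ℝ)) := by
  have h : 1 + ‖x‖ ^ 2 ≤ (1 + ‖x‖) ^ 2 := by nlinarith [norm_nonneg x]
  calc (1 + ‖x‖) ^ (-((2 * m : ℕ) : ℝ)) = ((1 + ‖x‖) ^ 2) ^ (-(m : ℝ)) := by
        rw [← Real.rpow_natCast_mul (by positivity)]
        push_cast
        ring_nf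
    _ ≤ (1 + ‖x‖ ^ 2) ^ (-(m : ℝ)) :=
        Real.rpow_le_rpow_of_nonpos (by positivity) h (by simp)

namespace MeasureTheory.Measure

variable {E : Type*} [NormedAddCommGroup E] [MeasurableSpace E]

theorem hasTemperateGrowth_of_lintegral_one_add_sq_rpow_neg_lt_top [OpensMeasurableSpace E]
    {μ : Measure E} {m : ℕ}
    (h : ∫⁻ x, ENNReal.ofReal ((1 + ‖x‖ ^ 2) ^ (-(m : ℝ))) ∂μ < ⊤) : μ.HasTemperateGrowth := by
  have hint : Integrable (fun x ↦ (1 + ‖x‖ ^ 2) ^ (-(m : ℝ))) μ :=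
    (lintegral_ofReal_ne_top_iff_integrable (by fun_prop : Measurable _).aestronglyMeasurable
      (ae_of_all _ fun x ↦ by positivity)).1 h.ne
  refine ⟨⟨2 * m, hint.mono' (by fun_prop : Measurable _).aestronglyMeasurable
    (ae_of_all _ fun x ↦ ?_)⟩⟩
  rw [Real.norm_of_nonneg (by positivity)]
  exact one_add_norm_rpow_neg_two_mul_le m x

-- Through `SigmaFinite.of_isFiniteMeasureOnCompacts` this makes tempered measures σ-finite,
-- as Fubini requires.
instance HasTemperateGrowth.isFiniteMeasureOnCompacts {μ : Measure E}
    [h : μ.HasTemperateGrowth] : IsFiniteMeasureOnCompacts μ := by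
  refine ⟨fun K hK ↦ ?_⟩
  obtain ⟨n, hn⟩ := h.exists_integrable
  obtain ⟨R, hR⟩ := hK.isBounded.subset_closedBall 0
  refine (measure_mono fun x hx ↦ ?_).trans_lt
    (hn.measure_ge_lt_top (ε := (1 + max R 0) ^ (-(n : ℝ))) (by positivity))
  have : ‖x‖ ≤ max R 0 := (mem_closedBall_zero_iff.1 (hR hx)).trans (le_max_left _ _)
  exact Real.rpow_le_rpow_of_nonpos (by positivity) (by linarith) (by simp)

end MeasureTheory.Measure

theorem SchwartzMap.exists_eq_comp_const_sub {D F : Type*} [NormedAddCommGroup D]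
    [NormedSpace ℝ D] [NormedAddCommGroup F] [NormedSpace ℝ F] (ψ : 𝓢(D, F)) (x : D) :
    ∃ χ : 𝓢(D, F), ∀ z, χ z = ψ (x - z) :=
  ⟨compSubConstCLM ℝ x (compCLMOfContinuousLinearEquiv ℝ (ContinuousLinearEquiv.neg ℝ) ψ),
    fun z ↦ by simp⟩

theorem integral_mul_conj_eq_conj {α : Type*} [MeasurableSpace α] (μ : Measure α)
    (g h : α → ℂ) : ∫ a, g a * conj (h a) ∂μ = conj (∫ a, h a * conj (g a) ∂μ) := by
  rw [← integral_conj]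
  congr 1 with a
  simp [mul_comm]

theorem integral_mul_conj_self {α : Type*} [MeasurableSpace α] (μ : Measure α) (g : α → ℂ) :
    ∫ a, g a * conj (g a) ∂μ = ((∫ a, Complex.normSq (g a) ∂μ : ℝ) : ℂ) := by
  simp [← integral_complex_ofReal, Complex.mul_conj]

variable {V : Type*} [NormedAddCommGroup V] [InnerProductSpace ℝ V] [FiniteDimensional ℝ V]
  [MeasurableSpace V] [BorelSpace V]

theorem Real.fourier_comp_const_sub {E : Type*} [NormedAddCommGroup E] [NormedSpace ℂ E]
    (f : V → E) (x w : V) : 𝓕 (fun z ↦ f (x - z)) w = 𝐞 (-⟪x, w⟫) • 𝓕 f (-w) := by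
  simp only [Real.fourier_eq]
  rw [← integral_sub_left_eq_self _ volume x]
  simp only [Circle.smul_def, ← integral_smul, sub_sub_cancel, smul_smul, ← Circle.coe_mul,
    ← AddChar.map_add_eq_mul, inner_sub_left, inner_neg_right]
  ring_nf

theorem Real.fourier_conj (f : V → ℂ) (w : V) :
    𝓕 (fun v ↦ conj (f v)) w = conj (𝓕 f (-w)) := by
  simp only [Real.fourier_eq, ← integral_conj, inner_neg_right, neg_neg, Circle.smul_def,
    smul_eq_mul, map_mul, ← Circle.coe_inv_eq_conj, AddChar.map_neg_eq_inv]

theorem Real.fourier_ofReal_neg (f : V → ℝ) (w : V) :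
    𝓕 (fun v ↦ (f v : ℂ)) (-w) = conj (𝓕 (fun v ↦ (f v : ℂ)) w) := by
  simpa using Real.fourier_conj (fun v ↦ (f v : ℂ)) (-w)

theorem SchwartzMap.integrable_fourier_ofReal {μ : Measure V} [μ.HasTemperateGrowth]
    (ψ : 𝓢(V, ℝ)) : Integrable (𝓕 fun v ↦ (ψ v : ℂ)) μ :=
  (𝓕 (ψ.postcompCLM Complex.ofRealCLM)).integrable

section Covariance

variable {μ : Measure V} {f : V → ℝ}

theorem ofReal_integral_mul_comp_sub_eq
    (hrep : ∀ φ : 𝓢(V, ℝ), ((∫ x, f x * φ x : ℝ) : ℂ) = ∫ ξ, 𝓕 (fun x ↦ (φ x : ℂ)) ξ ∂μ)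
    (ψ : 𝓢(V, ℝ)) (x : V) :
    ((∫ y, f (x - y) * ψ y : ℝ) : ℂ) =
      ∫ ξ, 𝐞 (-⟪x, ξ⟫) • conj (𝓕 (fun v ↦ (ψ v : ℂ)) ξ) ∂μ := by
  obtain ⟨χ, hχ⟩ := ψ.exists_eq_comp_const_sub x
  have hsub : ∫ y, f (x - y) * ψ y = ∫ z, f z * χ z := by
    simpa [hχ] using integral_sub_left_eq_self (fun z ↦ f z * ψ (x - z)) volume x
  rw [hsub, hrep χ]
  congr 1 with ξ
  simp only [hχ, Real.fourier_comp_const_sub (fun v ↦ (ψ v : ℂ)), Real.fourier_ofReal_neg]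

theorem ofReal_integral_integral_mul_comp_sub_eq [μ.HasTemperateGrowth]
    (hrep : ∀ φ : 𝓢(V, ℝ), ((∫ x, f x * φ x : ℝ) : ℂ) = ∫ ξ, 𝓕 (fun x ↦ (φ x : ℂ)) ξ ∂μ)
    (φ ψ : 𝓢(V, ℝ)) :
    ((∫ x, ∫ y, φ x * f (x - y) * ψ y : ℝ) : ℂ) =
      ∫ ξ, 𝓕 (fun x ↦ (φ x : ℂ)) ξ * conj (𝓕 (fun x ↦ (ψ x : ℂ)) ξ) ∂μ := by
  have hFubini := VectorFourier.integral_fourierIntegral_smul_eq_flip (e := 𝐞) (L := innerₗ V)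
    (ν := μ) Real.continuous_fourierChar continuous_inner (φ.integrable (μ := volume)).ofReal
    (Complex.conjCLE.toContinuousLinearMap.integrable_comp (ψ.integrable_fourier_ofReal (μ := μ)))
  calc ((∫ x, ∫ y, φ x * f (x - y) * ψ y : ℝ) : ℂ)
      = ∫ x, (φ x : ℂ) * ((∫ y, f (x - y) * ψ y : ℝ) : ℂ) := by
        simp only [mul_assoc, integral_const_mul]
        rw [← integral_complex_ofReal]
        simp only [Complex.ofReal_mul]
    _ = ∫ x, (φ x : ℂ) • ∫ ξ, 𝐞 (-⟪x, ξ⟫) • conj (𝓕 (fun v ↦ (ψ v : ℂ)) ξ) ∂μ := by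
        simp only [ofReal_integral_mul_comp_sub_eq hrep, smul_eq_mul]
    _ = _ := hFubini.symm

end Covariance

theorem covariance_form_parseval_general
    (d : ℕ) (f : EuclideanSpace ℝ (Fin d) → ℝ)
    (μ : Measure (EuclideanSpace ℝ (Fin d)))
    (m : ℕ)
    (htemp : (∫⁻ ξ, ENNReal.ofReal ((1 + ‖ξ‖ ^ 2) ^ (-(m : ℝ))) ∂μ) < ⊤)
    (hrep : ∀ φ : 𝓢(EuclideanSpace ℝ (Fin d), ℝ),
      ((∫ x, f x * φ x : ℝ) : ℂ)
        = ∫ ξ, FourierTransform.fourier (fun x => (φ x : ℂ)) ξ ∂μ) :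
    ∀ φ ψ : 𝓢(EuclideanSpace ℝ (Fin d), ℝ),
      (((∫ x, ∫ y, φ x * f (x - y) * ψ y : ℝ)) : ℂ)
          = ∫ ξ, FourierTransform.fourier (fun x => (φ x : ℂ)) ξ *
              (starRingEnd ℂ) (FourierTransform.fourier (fun x => (ψ x : ℂ)) ξ) ∂μ ∧
        (∫ x, ∫ y, φ x * f (x - y) * ψ y) = (∫ x, ∫ y, ψ x * f (x - y) * φ y) ∧
        0 ≤ ∫ x, ∫ y, φ x * f (x - y) * φ y := by
  have := Measure.hasTemperateGrowth_of_lintegral_one_add_sq_rpow_neg_lt_top htemp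
  have parseval := ofReal_integral_integral_mul_comp_sub_eq hrep
  intro φ ψ
  refine ⟨parseval φ ψ, ?_, ?_⟩
  · have hswap : ((∫ x, ∫ y, φ x * f (x - y) * ψ y : ℝ) : ℂ) =
        ((∫ x, ∫ y, ψ x * f (x - y) * φ y : ℝ) : ℂ) := by
      rw [parseval, integral_mul_conj_eq_conj, ← parseval, Complex.conj_ofReal]
    exact_mod_cast hswap
  · have hnormSq : ((∫ x, ∫ y, φ x * f (x - y) * φ y : ℝ) : ℂ) =
        ((∫ ξ, Complex.normSq (𝓕 (fun x ↦ (φ x : ℂ)) ξ) ∂μ : ℝ) : ℂ) :=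
      (parseval φ φ).trans (integral_mul_conj_self μ _)
    rw [Complex.ofReal_injective hnormSq]
    exact integral_nonneg fun ξ ↦ Complex.normSq_nonneg _

/-- If `f : ℝ^d → [0,∞)` is continuous away from `0`, integrable near `0`, and is the
Fourier transform of a non-negative tempered measure `μ` (i.e.
`∫ f φ = ∫ Fφ dμ` for all Schwartz `φ`), then for all Schwartz `φ, ψ`,
`∫∫ φ(x) f(x−y) ψ(y) dx dy = ∫ Fφ(ξ) conj(Fψ(ξ)) μ(dξ)`; in particular the bilinear
form `(φ,ψ) ↦ ∫∫ φ(x) f(x−y) ψ(y) dx dy` is symmetric and positive semi-definite. -/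
theorem covariance_form_parseval
    (d : ℕ) (f : EuclideanSpace ℝ (Fin d) → ℝ)
    (hf0 : ∀ x, 0 ≤ f x)
    (hfc : ContinuousOn f {x : EuclideanSpace ℝ (Fin d) | x ≠ 0})
    (hfi : IntegrableOn f (Metric.ball 0 1))
    (μ : Measure (EuclideanSpace ℝ (Fin d)))
    (m : ℕ) (hm : 1 ≤ m)
    (htemp : (∫⁻ ξ, ENNReal.ofReal ((1 + ‖ξ‖ ^ 2) ^ (-(m : ℝ))) ∂μ) < ⊤)
    (hrep : ∀ φ : 𝓢(EuclideanSpace ℝ (Fin d), ℝ),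
      ((∫ x, f x * φ x : ℝ) : ℂ)
        = ∫ ξ, FourierTransform.fourier (fun x => (φ x : ℂ)) ξ ∂μ) :
    ∀ φ ψ : 𝓢(EuclideanSpace ℝ (Fin d), ℝ),
      (((∫ x, ∫ y, φ x * f (x - y) * ψ y : ℝ)) : ℂ)
          = ∫ ξ, FourierTransform.fourier (fun x => (φ x : ℂ)) ξ *
              (starRingEnd ℂ) (FourierTransform.fourier (fun x => (ψ x : ℂ)) ξ) ∂μ ∧
        (∫ x, ∫ y, φ x * f (x - y) * ψ y) = (∫ x, ∫ y, ψ x * f (x - y) * φ y) ∧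
        0 ≤ ∫ x, ∫ y, φ x * f (x - y) * φ y :=
  covariance_form_parseval_general d f μ m htemp hrep
end

section
/- Let (f_n)_{n≥0} be a sequence of non-negative bounded measurable functions on [0,T], let g ∈ L¹([0,T]) be non-negative, and suppose f_{n+1}(t) ≤ C ∫₀^t f_n(s) g(t−s) ds for all n ≥ 0 and t ∈ [0,T], with f₀ bounded by a constant M. Then sup_{n≥0} sup_{t∈[0,T]} f_n(t) < ∞. -/
open MeasureTheory Real Filter

/-- Gronwall-type lemma (Dalang 1999, Lemma 15): if `(f_n)` are non-negative bounded
measurable functions on `[0,T]`, `g ∈ L¹([0,T])` is non-negative, `f₀ ≤ M` on `[0,T]`,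
and `f_{n+1}(t) ≤ C ∫₀^t f_n(s) g(t−s) ds`, then `sup_n sup_{t∈[0,T]} f_n(t) < ∞`. -/
theorem gronwall_picard_uniform_bound
    (T C M : ℝ) (hT : 0 ≤ T) (hC : 0 < C) (hM : 0 < M)
    (g : ℝ → ℝ) (hg0 : ∀ s, 0 ≤ g s) (hgi : IntegrableOn g (Set.Icc 0 T))
    (f : ℕ → ℝ → ℝ) (hfm : ∀ n, Measurable (f n))
    (hf0 : ∀ n, ∀ t ∈ Set.Icc (0 : ℝ) T, 0 ≤ f n t)
    (hfb : ∀ n, ∃ B, ∀ t ∈ Set.Icc (0 : ℝ) T, f n t ≤ B)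
    (hbase : ∀ t ∈ Set.Icc (0 : ℝ) T, f 0 t ≤ M)
    (hrec : ∀ n, ∀ t ∈ Set.Icc (0 : ℝ) T,
      f (n + 1) t ≤ C * ∫ s in (0 : ℝ)..t, f n s * g (t - s)) :
    ∃ K : ℝ, ∀ n, ∀ t ∈ Set.Icc (0 : ℝ) T, f n t ≤ K := by
  have hgIoc : IntegrableOn g (Set.Ioc 0 T) := hgi.mono_set Set.Ioc_subset_Icc_self
  have hgIT : IntervalIntegrable g volume 0 T := by
    rw [intervalIntegrable_iff, Set.uIoc_of_le hT]; exact hgIoc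
  -- Step 1: choose λ = N with C * ∫₀ᵀ e^{-λu} g u du ≤ 1
  have hdom : Tendsto (fun n : ℕ => ∫ u in Set.Ioc (0:ℝ) T, Real.exp (-(n:ℝ) * u) * g u)
      atTop (nhds 0) := by
    have h := tendsto_integral_of_dominated_convergence
      (μ := volume.restrict (Set.Ioc (0:ℝ) T))
      (F := fun (n : ℕ) (u : ℝ) => Real.exp (-(n:ℝ) * u) * g u)
      (f := fun _ => (0:ℝ)) g ?_ ?_ ?_ ?_
    · simpa using h
    · intro n
      exact (Continuous.aestronglyMeasurable (by continuity)).mul hgIoc.aestronglyMeasurable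
    · exact hgIoc
    · intro n
      rw [ae_restrict_iff' measurableSet_Ioc]
      filter_upwards with u hu
      have h1 : Real.exp (-(n:ℝ) * u) ≤ 1 := by
        apply Real.exp_le_one_iff.mpr
        have := hu.1.le
        nlinarith [Nat.cast_nonneg (α := ℝ) n]
      rw [Real.norm_eq_abs, abs_of_nonneg (mul_nonneg (Real.exp_pos _).le (hg0 u))]
      nlinarith [hg0 u, Real.exp_pos (-(n:ℝ) * u)]
    · rw [ae_restrict_iff' measurableSet_Ioc]
      filter_upwards with u hu
      have hmul : Tendsto (fun n : ℕ => (n:ℝ) * u) atTop atTop :=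
        Tendsto.atTop_mul_const hu.1 tendsto_natCast_atTop_atTop
      have h2 : Tendsto (fun n : ℕ => Real.exp (-((n:ℝ) * u))) atTop (nhds 0) :=
        Real.tendsto_exp_atBot.comp (Filter.tendsto_neg_atBot_iff.mpr hmul)
      simpa [neg_mul] using h2.mul_const (g u)
  obtain ⟨N, hN⟩ : ∃ N : ℕ, (∫ u in Set.Ioc (0:ℝ) T, Real.exp (-(N:ℝ) * u) * g u) < 1 / C :=
    (hdom.eventually (gt_mem_nhds (by positivity))).exists
  set l : ℝ := (N : ℝ) with hl
  have hl0 : 0 ≤ l := Nat.cast_nonneg N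
  have hKey : C * ∫ u in (0:ℝ)..T, Real.exp (-l * u) * g u ≤ 1 := by
    rw [intervalIntegral.integral_of_le hT]
    calc C * ∫ u in Set.Ioc (0:ℝ) T, Real.exp (-l * u) * g u
        ≤ C * (1 / C) := by
          apply mul_le_mul_of_nonneg_left hN.le hC.le
      _ = 1 := by field_simp
  have hexpT : IntervalIntegrable (fun u => Real.exp (-l * u) * g u) volume 0 T :=
    hgIT.continuousOn_mul (by fun_prop)
  -- Step 2: induction
  have main : ∀ n, ∀ t ∈ Set.Icc (0:ℝ) T, f n t ≤ M * Real.exp (l * t) := by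
    intro n
    induction n with
    | zero =>
      intro t ht
      calc f 0 t ≤ M := hbase t ht
        _ ≤ M * Real.exp (l * t) := by
            nlinarith [Real.one_le_exp (mul_nonneg hl0 ht.1)]
    | succ n ih =>
      intro t ht
      obtain ⟨ht0, htT⟩ := ht
      have hsub : Set.Ioc (0:ℝ) t ⊆ Set.Icc 0 T := fun x hx =>
        ⟨hx.1.le, hx.2.trans htT⟩
      have h1 : IntervalIntegrable g volume 0 t := by
        apply hgIT.mono_set
        rw [Set.uIcc_of_le ht0, Set.uIcc_of_le hT]
        exact Set.Icc_subset_Icc le_rfl htT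
      have hgt : IntervalIntegrable (fun s => g (t - s)) volume 0 t := by
        have h2 := (h1.comp_sub_left t).symm
        simpa using h2
      obtain ⟨B, hB⟩ := hfb n
      have hfn_int : IntervalIntegrable (fun s => f n s * g (t - s)) volume 0 t := by
        rw [intervalIntegrable_iff, Set.uIoc_of_le ht0]
        apply Integrable.bdd_mul (c := B)
          ((intervalIntegrable_iff.mp hgt).mono_set (by rw [Set.uIoc_of_le ht0]))
          ((hfm n).aestronglyMeasurable.restrict)
        · rw [ae_restrict_iff' measurableSet_Ioc]
          filter_upwards with x hx
          rw [Real.norm_eq_abs, abs_of_nonneg (hf0 n x (hsub hx))]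
          exact hB x (hsub hx)
      have hexp_int : IntervalIntegrable (fun s => M * Real.exp (l * s) * g (t - s))
          volume 0 t := hgt.continuousOn_mul (by fun_prop)
      have step1 : (∫ s in (0:ℝ)..t, f n s * g (t - s))
          ≤ ∫ s in (0:ℝ)..t, M * Real.exp (l * s) * g (t - s) := by
        apply intervalIntegral.integral_mono_on ht0 hfn_int hexp_int
        intro x hx
        have hxT : x ∈ Set.Icc (0:ℝ) T := ⟨hx.1, hx.2.trans htT⟩
        exact mul_le_mul_of_nonneg_right (ih x hxT) (hg0 _)
      have step2 : (∫ s in (0:ℝ)..t, M * Real.exp (l * s) * g (t - s))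
          = M * Real.exp (l * t) * ∫ u in (0:ℝ)..t, Real.exp (-l * u) * g u := by
        have e1 : (fun s => M * Real.exp (l * s) * g (t - s))
            = fun s => (fun u => M * Real.exp (l * (t - u)) * g u) (t - s) := by
          funext s; simp [sub_sub_cancel]
        rw [e1, intervalIntegral.integral_comp_sub_left (fun u => M * Real.exp (l * (t - u)) * g u) t]
        simp only [sub_self, sub_zero]
        rw [← intervalIntegral.integral_const_mul]
        apply intervalIntegral.integral_congr
        intro x _
        beta_reduce
        rw [show l * (t - x) = l * t + -l * x from by ring, Real.exp_add]
        ring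
      have step3 : (∫ u in (0:ℝ)..t, Real.exp (-l * u) * g u)
          ≤ ∫ u in (0:ℝ)..T, Real.exp (-l * u) * g u := by
        apply intervalIntegral.integral_mono_interval le_rfl ht0 htT _ hexpT
        filter_upwards with u
        exact mul_nonneg (Real.exp_pos _).le (hg0 u)
      have hMe : 0 ≤ M * Real.exp (l * t) := by positivity
      calc f (n + 1) t ≤ C * ∫ s in (0:ℝ)..t, f n s * g (t - s) := hrec n t ⟨ht0, htT⟩
        _ ≤ C * ∫ s in (0:ℝ)..t, M * Real.exp (l * s) * g (t - s) :=
            mul_le_mul_of_nonneg_left step1 hC.le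
        _ = M * Real.exp (l * t) * (C * ∫ u in (0:ℝ)..t, Real.exp (-l * u) * g u) := by
            rw [step2]; ring
        _ ≤ M * Real.exp (l * t) * (C * ∫ u in (0:ℝ)..T, Real.exp (-l * u) * g u) := by
            apply mul_le_mul_of_nonneg_left (mul_le_mul_of_nonneg_left step3 hC.le) hMe
        _ ≤ M * Real.exp (l * t) * 1 := mul_le_mul_of_nonneg_left hKey hMe
        _ = M * Real.exp (l * t) := mul_one _
  refine ⟨M * Real.exp (l * T), fun n t ht => (main n t ht).trans ?_⟩
  have : Real.exp (l * t) ≤ Real.exp (l * T) :=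
    Real.exp_le_exp.mpr (mul_le_mul_of_nonneg_left ht.2 hl0)
  nlinarith [Real.exp_pos (l * t)]
end
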